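/- arXiv:1010.5477 — 2 statements merged into one kernel-verified Lean document; each statement's English description precedes it below -/
import Mathlib

section
/- Let {X₁,…,Xₙ} (n ≥ 2) be a pairwise incomparable family of nonempty subsets of a finite set. If xᵢ ≥ 0 for every i ∈ X₁ ∪ … ∪ Xₙ, and for every j we have Σ_{i ∈ Xⱼ} xᵢ ≤ 3^{|Xⱼ|}, then Σ_{i ∈ X₁∪…∪Xₙ} xᵢ < 3^{|X₁∪…∪Xₙ|}. -/
namespace HG

variable {α : Type*} [DecidableEq α]

/-- The carrier of a hypergraph: the union of its members. -/
def carrier (H : Finset (Finset α)) : Finset α := H.sup id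

/-- A hypergraph (on its carrier) is a finite family of sets not containing `∅`. -/
def IsHypergraph (H : Finset (Finset α)) : Prop := ∅ ∉ H

/-- The restriction `H_Y = {X ∈ H ∣ X ⊆ Y}`. -/
def restrict (H : Finset (Finset α)) (Y : Finset α) : Finset (Finset α) :=
  H.filter (· ⊆ Y)

/-- `x` and `y` are joined by a path of `H`: a nonempty sequence of distinct members
of `H`, consecutive members intersecting, the first containing `x`, the last `y`. -/
def Joined (H : Finset (Finset α)) (x y : α) : Prop :=
  ∃ (X : Finset α) (l : List (Finset α)),
    (X :: l).Nodup ∧ (∀ Z ∈ X :: l, Z ∈ H) ∧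
    (X :: l).Chain' (fun A B => (A ∩ B).Nonempty) ∧
    x ∈ X ∧ y ∈ (X :: l).getLast (List.cons_ne_nil X l)

/-- Path-connectedness of a hypergraph: any two carrier elements are joined. -/
def Conn (H : Finset (Finset α)) : Prop :=
  ∀ x ∈ carrier H, ∀ y ∈ carrier H, Joined H x y

/-- `P` is a hypergraph partition of `H`: a partition of `H` whose family of
carriers is a partition of the carrier of `H`. -/
def IsHGPartition (H : Finset (Finset α)) (P : Finset (Finset (Finset α))) : Prop :=
  (∀ Q ∈ P, Q ≠ ∅) ∧
  (∀ Q ∈ P, ∀ Q' ∈ P, Q ≠ Q' → Disjoint Q Q') ∧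
  P.sup id = H ∧
  (∀ Q ∈ P, ∀ Q' ∈ P, Q ≠ Q' → Disjoint (carrier Q) (carrier Q'))

/-- A hypergraph is atomic when it contains all singletons of carrier elements. -/
def Atomic (H : Finset (Finset α)) : Prop := ∀ x ∈ carrier H, {x} ∈ H

/-- A hypergraph is saturated when intersecting members have their union in it. -/
def Saturated (H : Finset (Finset α)) : Prop :=
  ∀ X ∈ H, ∀ Y ∈ H, (X ∩ Y).Nonempty → X ∪ Y ∈ H

/-- `Y` is dispensable in `H` when `(H_Y) \ {Y}` is a connected hypergraph on `Y`. -/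
def Dispensable (H : Finset (Finset α)) (Y : Finset α) : Prop :=
  IsHypergraph ((restrict H Y).erase Y) ∧
  carrier ((restrict H Y).erase Y) = Y ∧
  Conn ((restrict H Y).erase Y)

/-- `J` enhances `H` when `J = H ∪ {Y}` for some `Y ∉ H` dispensable in `H`. -/
def Enhances (J H : Finset (Finset α)) : Prop :=
  ∃ Y, Dispensable H Y ∧ Y ∉ H ∧ J = insert Y H

/-- Cognation: the equivalence closure of the enhancement relation. -/
def Cognate (H J : Finset (Finset α)) : Prop :=
  Relation.EqvGen Enhances H J

/-- The finest hypergraph partition: one all of whose parts are connected. -/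
def FinestHGPartition (H : Finset (Finset α)) (P : Finset (Finset (Finset α))) : Prop :=
  IsHGPartition H P ∧ ∀ Q ∈ P, Conn Q

/-- Constructions of a hypergraph, defined recursively. -/
inductive IsConstruction : Finset (Finset α) → Finset (Finset α) → Prop
  | empty : IsConstruction ∅ ∅
  | conn {H K : Finset (Finset α)} {x : α} :
      (carrier H).Nonempty → Conn H → x ∈ carrier H →
      IsConstruction (restrict H ((carrier H).erase x)) K →
      IsConstruction H (insert (carrier H) K)
  | parts {H : Finset (Finset α)} {P : Finset (Finset (Finset α))}
      {K : Finset (Finset α) → Finset (Finset α)} :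
      2 ≤ (carrier H).card → ¬ Conn H → 2 ≤ P.card → FinestHGPartition H P →
      (∀ Q ∈ P, IsConstruction Q (K Q)) →
      IsConstruction H (P.sup K)

/-- An `M`-antichain: at least two members of `M`, pairwise incomparable. -/
def IsAntichainIn (M S : Finset (Finset α)) : Prop :=
  S ⊆ M ∧ 2 ≤ S.card ∧ ∀ X ∈ S, ∀ Y ∈ S, X ≠ Y → ¬ X ⊆ Y ∧ ¬ Y ⊆ X

/-- `S` misses `H` when the union of `S` is not a member of `H`. -/
def Misses (H S : Finset (Finset α)) : Prop := S.sup id ∉ H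

/-- `x` is `X`-superficial relative to `M`. -/
def Superficial (M : Finset (Finset α)) (X : Finset α) (x : α) : Prop :=
  x ∈ X ∧ ∀ Y ∈ M, Y ⊂ X → x ∉ Y

/-- ASC-hypergraph: atomic, saturated and connected hypergraph. -/
def ASC (H : Finset (Finset α)) : Prop :=
  IsHypergraph H ∧ Atomic H ∧ Saturated H ∧ Conn H

end HG

open HG

lemma succ_lt_three_pow : ∀ d : ℕ, 1 ≤ d → 1 + d < 3 ^ d := by
  intro d hd
  induction d with
  | zero => omega
  | succ n ih =>
    rcases Nat.eq_zero_or_pos n with h | h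
    · subst h; norm_num
    · have h1 := ih h
      have h2 : 1 ≤ 3 ^ n := Nat.one_le_pow _ _ (by norm_num)
      have h3 : 3 ^ (n + 1) = 3 ^ n + 3 ^ n + 3 ^ n := by ring
      omega

lemma aux_sum_sup_le {α : Type*} [DecidableEq α] (C : Finset (Finset α)) (x : α → ℝ)
    (hx : ∀ i ∈ C.sup id, 0 ≤ x i) :
    ∑ i ∈ C.sup id, x i ≤ ∑ X ∈ C, ∑ i ∈ X, x i := by
  induction C using Finset.induction with
  | empty => simp
  | @insert X C hXC ih =>
    rw [Finset.sup_insert, Finset.sum_insert hXC]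
    have hmem : ∀ i ∈ C.sup id, i ∈ (insert X C).sup id := by
      intro i hi
      rw [Finset.sup_insert]
      exact Finset.mem_union_right _ hi
    have hx' : ∀ i ∈ C.sup id, 0 ≤ x i := fun i hi => hx i (by
      rw [Finset.sup_insert]; exact Finset.mem_union_right _ hi)
    have key : ∑ i ∈ (id X ⊔ C.sup id), x i ≤ ∑ i ∈ X, x i + ∑ i ∈ C.sup id, x i := by
      have hui : ∑ i ∈ (X ∪ C.sup id), x i + ∑ i ∈ (X ∩ C.sup id), x i
          = ∑ i ∈ X, x i + ∑ i ∈ C.sup id, x i := Finset.sum_union_inter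
      have hnn : 0 ≤ ∑ i ∈ (X ∩ C.sup id), x i := Finset.sum_nonneg (fun i hi =>
        hx i (by rw [Finset.sup_insert]
                 exact Finset.mem_union_left _ (Finset.mem_of_mem_inter_left hi)))
      have : (id X ⊔ C.sup id) = X ∪ C.sup id := rfl
      rw [this]
      linarith
    exact key.trans (by linarith [ih hx'])

theorem antichain_sum_lt
    {α : Type*} [DecidableEq α]
    (F : Finset (Finset α)) (x : α → ℝ)
    (hne : ∀ X ∈ F, X.Nonempty) (hcard : 2 ≤ F.card)
    (hinc : ∀ X ∈ F, ∀ Y ∈ F, X ≠ Y → ¬ X ⊆ Y ∧ ¬ Y ⊆ X)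
    (hx : ∀ i ∈ F.sup id, 0 ≤ x i)
    (hb : ∀ X ∈ F, ∑ i ∈ X, x i ≤ (3 : ℝ) ^ X.card) :
    ∑ i ∈ F.sup id, x i < (3 : ℝ) ^ (F.sup id).card := by
  classical
  set U := F.sup id with hU
  have hFne : F.Nonempty := Finset.card_pos.mp (by omega)
  obtain ⟨X₁, hX₁F, hmax⟩ := F.exists_max_image Finset.card hFne
  have hsub : ∀ X ∈ F, X ⊆ U := fun X hX => Finset.le_sup (f := id) hX
  obtain ⟨Y, hYF, hYne⟩ : ∃ Y ∈ F, Y ≠ X₁ := by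
    obtain ⟨a, ha, b, hb', hab⟩ := Finset.one_lt_card.mp hcard
    by_cases h : a = X₁
    · exact ⟨b, hb', by rw [← h]; exact fun e => hab e.symm⟩
    · exact ⟨a, ha, h⟩
  obtain ⟨y, hyY, hyX₁⟩ := Finset.not_subset.mp ((hinc Y hYF X₁ hX₁F hYne).1)
  have hXU : X₁ ⊂ U := ⟨hsub X₁ hX₁F, fun h => hyX₁ (h (hsub Y hYF hyY))⟩
  have hklt : X₁.card < U.card := Finset.card_lt_card hXU
  have hch : ∀ i ∈ U, ∃ X ∈ F, i ∈ X := by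
    intro i hi
    obtain ⟨X, hXF, hiX⟩ := Finset.mem_sup.mp hi
    exact ⟨X, hXF, hiX⟩
  choose! g hg1 hg2 using hch
  set C : Finset (Finset α) := insert X₁ ((U \ X₁).image g) with hC
  have hCF : C ⊆ F := by
    intro X hX
    rw [hC, Finset.mem_insert] at hX
    rcases hX with h | h
    · rw [h]; exact hX₁F
    · obtain ⟨i, hi, rfl⟩ := Finset.mem_image.mp h
      exact hg1 i (Finset.mem_sdiff.mp hi).1
  have hcover : U = C.sup id := by
    apply Finset.Subset.antisymm
    · intro i hi
      by_cases h : i ∈ X₁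
      · exact Finset.mem_sup.mpr ⟨X₁, Finset.mem_insert_self _ _, h⟩
      · refine Finset.mem_sup.mpr ⟨g i, ?_, hg2 i hi⟩
        exact Finset.mem_insert_of_mem (Finset.mem_image.mpr
          ⟨i, Finset.mem_sdiff.mpr ⟨hi, h⟩, rfl⟩)
    · intro i hi
      obtain ⟨X, hXC, hiX⟩ := Finset.mem_sup.mp hi
      exact hsub X (hCF hXC) hiX
  have hCcard : C.card ≤ 1 + (U.card - X₁.card) := by
    calc C.card ≤ ((U \ X₁).image g).card + 1 := Finset.card_insert_le _ _
    _ ≤ (U \ X₁).card + 1 := by gcongr; exact Finset.card_image_le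
    _ = 1 + (U.card - X₁.card) := by
        rw [Finset.card_sdiff_of_subset hXU.subset]; omega
  set d : ℕ := U.card - X₁.card with hd
  have hd1 : 1 ≤ d := by omega
  have hdk : d + X₁.card = U.card := by omega
  have h3pos : (0:ℝ) < (3:ℝ) ^ X₁.card := by positivity
  have step1 : ∑ i ∈ U, x i ≤ ∑ X ∈ C, ∑ i ∈ X, x i := by
    rw [hcover]
    exact aux_sum_sup_le C x (fun i hi => hx i (by rwa [hcover]))
  have step2 : ∑ X ∈ C, ∑ i ∈ X, x i ≤ ∑ X ∈ C, (3:ℝ) ^ X₁.card := by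
    apply Finset.sum_le_sum
    intro X hX
    calc ∑ i ∈ X, x i ≤ (3:ℝ) ^ X.card := hb X (hCF hX)
    _ ≤ (3:ℝ) ^ X₁.card := by
        apply pow_le_pow_right₀ (by norm_num)
        exact hmax X (hCF hX)
  have step3 : ∑ X ∈ C, (3:ℝ) ^ X₁.card = (C.card : ℝ) * (3:ℝ) ^ X₁.card := by
    rw [Finset.sum_const, nsmul_eq_mul]
  have step4 : (C.card : ℝ) * (3:ℝ) ^ X₁.card < (3:ℝ) ^ U.card := by
    have hlt : (C.card : ℝ) < (3:ℝ) ^ d := by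
      have h2 : 1 + d < 3 ^ d := succ_lt_three_pow d hd1
      have h1 : C.card < 3 ^ d := lt_of_le_of_lt hCcard h2
      exact_mod_cast h1
    calc (C.card : ℝ) * (3:ℝ) ^ X₁.card < (3:ℝ) ^ d * (3:ℝ) ^ X₁.card :=
          mul_lt_mul_of_pos_right hlt h3pos
    _ = (3:ℝ) ^ U.card := by rw [← pow_add, hdk]
  calc ∑ i ∈ U, x i ≤ ∑ X ∈ C, ∑ i ∈ X, x i := step1
  _ ≤ ∑ X ∈ C, (3:ℝ) ^ X₁.card := step2
  _ = (C.card : ℝ) * (3:ℝ) ^ X₁.card := step3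
  _ < (3:ℝ) ^ U.card := step4
end

section
/- For H a graph (viewed as a hypergraph that is the saturated closure of an atomic hypergraph whose non-singleton members other than ⋃H are all two-element sets) that is not loose, and {X₁,…,Xₙ} ⊆ H with n ≥ 2: if Xᵢ ∪ Xⱼ ∉ H for all distinct i, j, then X₁ ∪ … ∪ Xₙ ∉ H. -/
open HG

/-- A graph: the saturated closure of a nonempty atomic hypergraph containing its
carrier and whose other non-singleton members are two-element sets. -/
def IsGraph {α : Type*} [DecidableEq α] (G : Finset (Finset α)) : Prop :=
  ∃ H' : Finset (Finset α), IsHypergraph H' ∧ Atomic H' ∧ H' ≠ ∅ ∧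
    carrier H' ∈ H' ∧ (∀ X ∈ H', X.card = 1 ∨ X.card = 2 ∨ X = carrier H') ∧
    Cognate H' G ∧ Saturated G

/-- A hypergraph is loose when `H \ {⋃H}` is not a connected hypergraph on `⋃H`,
i.e. `⋃H` is not dispensable in `H`. -/
def Loose {α : Type*} [DecidableEq α] (H : Finset (Finset α)) : Prop :=
  ¬ Dispensable H (carrier H)

/-!
Call `X` pair-connected in `H` when any two points of `X` are linked by a chain of pairs
`{u, v} ∈ H` inside `X`. A dispensable set is never a pair, so enhancing neither adds nor
removes pairs, and it keeps the carrier; since a dispensable set is covered by a connected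
family of proper members, pair-connectivity of all members other than the carrier passes along
cognation. For a graph it holds for the generating hypergraph, and if the graph is not loose the
carrier is pair-connected too. If `⋃F ∈ G`, a chain of pairs from `X ∈ F` to a point outside `X`
leaves `X` through a pair `{u, v}` with `u ∈ X` and `v ∈ Z ∈ F`, and saturation puts
`X ∪ {u, v} ∪ Z = X ∪ Z` into `G`.
-/

theorem Relation.ReflTransGen.exists_rel_of_not {α : Type*} {r : α → α → Prop} {p : α → Prop}
    {a b : α} (hab : Relation.ReflTransGen r a b) (ha : p a) (hb : ¬ p b) :
    ∃ u v, r u v ∧ p u ∧ ¬ p v := by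
  induction hab with
  | refl => exact absurd ha hb
  | @tail c d _ hcd ih =>
    by_cases hc : p c
    · exact ⟨c, d, hcd, hc, hb⟩
    · exact ih hc

namespace HG

variable {α : Type*} [DecidableEq α]

theorem subset_carrier {H : Finset (Finset α)} {X : Finset α} (hX : X ∈ H) : X ⊆ carrier H :=
  Finset.le_sup (f := id) hX

theorem Joined.reflTransGen {r : α → α → Prop} {K : Finset (Finset α)}
    (hK : ∀ Z ∈ K, ∀ a ∈ Z, ∀ b ∈ Z, Relation.ReflTransGen r a b) {x y : α}
    (hxy : Joined K x y) : Relation.ReflTransGen r x y := by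
  obtain ⟨X, l, -, hmem, hchain, hx, hy⟩ := hxy
  induction l generalizing X x with
  | nil => exact hK X (hmem X (by simp)) x hx y (by simpa using hy)
  | cons Z l ih =>
    obtain ⟨⟨w, hw⟩, hchain⟩ := List.isChain_cons_cons.mp hchain
    rw [Finset.mem_inter] at hw
    exact (hK X (hmem X (by simp)) x hx w hw.1).trans
      (ih Z (fun W hW => hmem W (List.mem_cons_of_mem X hW)) hchain hw.2
        (by rwa [List.getLast_cons] at hy))

def PairAdj (H : Finset (Finset α)) (X : Finset α) (u v : α) : Prop :=
  u ∈ X ∧ v ∈ X ∧ ({u, v} : Finset α) ∈ H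

def PairConnected (H : Finset (Finset α)) (X : Finset α) : Prop :=
  ∀ a ∈ X, ∀ b ∈ X, Relation.ReflTransGen (PairAdj H X) a b

theorem pairConnected_of_card_le_two {H : Finset (Finset α)} {X : Finset α} (hX : X ∈ H)
    (h2 : X.card ≤ 2) : PairConnected H X := by
  intro a ha b hb
  rcases eq_or_ne a b with rfl | hab
  · exact .refl
  · have hpair : ({a, b} : Finset α) = X :=
      Finset.eq_of_subset_of_card_le (Finset.insert_subset ha (Finset.singleton_subset_iff.mpr hb))
        (by rw [Finset.card_pair hab]; exact h2)
    exact .single ⟨ha, hb, hpair ▸ hX⟩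

theorem pairConnected_congr {H J : Finset (Finset α)}
    (h : ∀ u v : α, ({u, v} : Finset α) ∈ H ↔ ({u, v} : Finset α) ∈ J) (X : Finset α) :
    PairConnected H X ↔ PairConnected J X := by
  have hadj : PairAdj H X = PairAdj J X := by
    funext u v
    simp only [PairAdj, h]
  rw [PairConnected, PairConnected, hadj]

theorem Conn.pairConnected_carrier {H K : Finset (Finset α)} (hc : Conn K)
    (hK : ∀ Z ∈ K, PairConnected H Z) : PairConnected H (carrier K) :=
  fun x hx y hy => (hc x hx y hy).reflTransGen fun Z hZ a ha b hb =>
    Relation.ReflTransGen.mono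
      (fun _ _ h => ⟨subset_carrier hZ h.1, subset_carrier hZ h.2.1, h.2.2⟩) _ _ (hK Z hZ a ha b hb)

theorem mem_erase_restrict {H : Finset (Finset α)} {Y Z : Finset α} :
    Z ∈ (restrict H Y).erase Y ↔ Z ≠ Y ∧ Z ∈ H ∧ Z ⊆ Y := by
  rw [Finset.mem_erase, restrict, Finset.mem_filter]

theorem Dispensable.subset_carrier {H : Finset (Finset α)} {Y : Finset α}
    (hd : Dispensable H Y) : Y ⊆ carrier H := by
  intro y hy
  rw [← hd.2.1] at hy
  obtain ⟨Z, hZ, hyZ⟩ := Finset.mem_sup.mp hy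
  exact HG.subset_carrier (mem_erase_restrict.mp hZ).2.1 hyZ

theorem Dispensable.carrier_insert {H : Finset (Finset α)} {Y : Finset α}
    (hd : Dispensable H Y) : carrier (insert Y H) = carrier H := by
  rw [carrier, Finset.sup_insert]
  exact sup_eq_right.mpr hd.subset_carrier

theorem not_dispensable_pair (H : Finset (Finset α)) (u v : α) :
    ¬ Dispensable H ({u, v} : Finset α) := by
  rintro ⟨-, hcar, hconn⟩
  set K := (restrict H {u, v}).erase {u, v}
  have hsmall : ∀ Z ∈ K, Z.card < ({u, v} : Finset α).card := fun Z hZ =>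
    Finset.card_lt_card ((mem_erase_restrict.mp hZ).2.2.ssubset_of_ne (mem_erase_restrict.mp hZ).1)
  have hu : u ∈ carrier K := by simp [hcar]
  -- every member of `K` is a singleton, so no chain of members of `K` leads from `u` to `v ≠ u`
  have hvu : v = u := (Relation.reflTransGen_iff_eq (r := fun _ _ : α => False) fun _ => id).mp <|
    (hconn u hu v (by simp [hcar])).reflTransGen fun Z hZ a ha b hb => by
      have := hsmall Z hZ
      rw [Finset.card_le_one.mp (by grind [Finset.card_le_two]) a ha b hb]
  subst hvu
  obtain ⟨Z, hZ, huZ⟩ := Finset.mem_sup.mp hu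
  have := hsmall Z hZ
  simp only [Finset.mem_singleton, Finset.insert_eq_of_mem, Finset.card_singleton,
    Order.lt_one_iff, Finset.card_eq_zero] at this
  simp [this] at huZ

theorem Dispensable.pair_mem_insert_iff {H : Finset (Finset α)} {Y : Finset α}
    (hd : Dispensable H Y) (u v : α) :
    ({u, v} : Finset α) ∈ insert Y H ↔ ({u, v} : Finset α) ∈ H := by
  refine ⟨fun h => (Finset.mem_insert.mp h).resolve_left ?_, Finset.mem_insert_of_mem⟩
  rintro rfl
  exact not_dispensable_pair H u v hd

def ProperMembersPairConnected (H : Finset (Finset α)) : Prop :=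
  ∀ X ∈ H, X ≠ carrier H → PairConnected H X

theorem Enhances.properMembersPairConnected_iff {J H : Finset (Finset α)} (hJH : Enhances J H) :
    ProperMembersPairConnected J ↔ ProperMembersPairConnected H := by
  obtain ⟨Y, hd, -, rfl⟩ := hJH
  simp only [ProperMembersPairConnected, hd.carrier_insert,
    pairConnected_congr hd.pair_mem_insert_iff, Finset.forall_mem_insert]
  refine ⟨And.right, fun hH => ⟨fun hY => ?_, hH⟩⟩
  rw [← hd.2.1]
  refine hd.2.2.pairConnected_carrier fun Z hZ => ?_
  obtain ⟨-, hZH, hZY⟩ := mem_erase_restrict.mp hZ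
  exact hH Z hZH fun hZcar => hY (hd.subset_carrier.antisymm (hZcar ▸ hZY))

theorem Cognate.properMembersPairConnected_iff {H J : Finset (Finset α)} (hHJ : Cognate H J) :
    ProperMembersPairConnected H ↔ ProperMembersPairConnected J :=
  (InvImage.equivalence _ ProperMembersPairConnected
    ⟨fun _ => Iff.rfl, Iff.symm, Iff.trans⟩).eqvGen_iff.mp
    (Relation.EqvGen.mono (fun _ _ h => h.properMembersPairConnected_iff) _ _ hHJ)

theorem ProperMembersPairConnected.pairConnected_of_not_loose {G : Finset (Finset α)}
    (hP : ProperMembersPairConnected G) (hl : ¬ Loose G) : ∀ X ∈ G, PairConnected G X := by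
  intro X hX
  rcases ne_or_eq X (carrier G) with hXcar | rfl
  · exact hP X hX hXcar
  · obtain ⟨-, hcar, hconn⟩ := not_not.mp hl
    rw [← hcar]
    exact hconn.pairConnected_carrier fun Z hZ =>
      hP Z (mem_erase_restrict.mp hZ).2.1 (mem_erase_restrict.mp hZ).1

theorem Saturated.exists_union_mem {G F : Finset (Finset α)} (hsat : Saturated G) (hF : F ⊆ G)
    (hcard : 2 ≤ F.card) (hU : PairConnected G (carrier F)) :
    ∃ X ∈ F, ∃ Z ∈ F, X ≠ Z ∧ X ∪ Z ∈ G := by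
  obtain ⟨X, hX, Y, hY, hXY⟩ := Finset.one_lt_card.mp hcard
  by_cases hYX : Y ⊆ X
  · exact ⟨X, hX, Y, hY, hXY, (Finset.union_eq_left.mpr hYX).symm ▸ hF hX⟩
  obtain ⟨b, hbY, hbX⟩ := Finset.not_subset.mp hYX
  obtain rfl | ⟨a, ha⟩ := X.eq_empty_or_nonempty
  · exact ⟨∅, hX, Y, hY, hXY, by simpa using hF hY⟩
  obtain ⟨u, v, ⟨-, hvU, huv⟩, huX, hvX⟩ :=
    (hU a (subset_carrier hX ha) b (subset_carrier hY hbY)).exists_rel_of_not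
      (p := (· ∈ X)) ha hbX
  obtain ⟨Z, hZ, hvZ : v ∈ Z⟩ := Finset.mem_sup.mp hvU
  have hXuv : X ∪ {u, v} ∈ G := hsat X (hF hX) _ huv ⟨u, by simp [huX]⟩
  have hXZ : X ∪ {u, v} ∪ Z = X ∪ Z := by grind
  refine ⟨X, hX, Z, hZ, ?_, hXZ ▸ hsat _ hXuv Z (hF hZ) ⟨v, by simp [hvZ]⟩⟩
  rintro rfl
  exact hvX hvZ

end HG

theorem IsGraph.properMembersPairConnected {α : Type*} [DecidableEq α] {G : Finset (Finset α)}
    (hG : IsGraph G) : ProperMembersPairConnected G := by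
  obtain ⟨H', -, -, -, -, hshape, hcog, -⟩ := hG
  refine hcog.properMembersPairConnected_iff.mp fun X hX hXcar => ?_
  refine pairConnected_of_card_le_two hX ?_
  rcases hshape X hX with h | h | h
  · omega
  · omega
  · exact absurd h hXcar

theorem graph_union_not_mem
    {α : Type*} [DecidableEq α]
    (G : Finset (Finset α)) (hG : IsGraph G) (hl : ¬ Loose G)
    (F : Finset (Finset α)) (hF : F ⊆ G) (hcard : 2 ≤ F.card)
    (h : ∀ X ∈ F, ∀ Y ∈ F, X ≠ Y → X ∪ Y ∉ G) :
    F.sup id ∉ G := by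
  intro hU
  have hconn := hG.properMembersPairConnected.pairConnected_of_not_loose hl
  obtain ⟨-, -, -, -, -, -, -, hsat⟩ := hG
  obtain ⟨X, hX, Z, hZ, hXZ, hXZG⟩ := hsat.exists_union_mem hF hcard (hconn _ hU)
  exact h X hX Z hZ hXZ hXZG
end
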